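/- Let M be a countable transitive model of ZF⁻. Then Col_≥(ω,Ord)^M is the union of an increasing Ord^M-indexed family of set-sized complete subforcings: Col_≥(ω,Ord)^M = ⋃_{α ∈ Ord^M} Col_≥(ω,α), where Col_≥(ω,α) ∈ M is the suborder of finite partial functions p : ω ⇀ α ∪ {≥β : β ≤ α} with the induced ordering, and each Col_≥(ω,α) is a complete subforcing of Col_≥(ω,Ord)^M, i.e., every maximal antichain of Col_≥(ω,α) remains maximal in Col_≥(ω,Ord)^M. -/

import Mathlib

set_option autoImplicit false

attribute [local instance] Classical.propDecidable

namespace CF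

/-- First-order formulas of the language of set theory with `κ` class-predicate
variables (the languages `L^κ`) and `n` free set variables; `κ = 0` gives the
pure ∈-formulas. There is no class quantification. -/
inductive CFml : ℕ → ℕ → Type
  | mem {κ n : ℕ} (i j : Fin n) : CFml κ n
  | eq {κ n : ℕ} (i j : Fin n) : CFml κ n
  | cls {κ n : ℕ} (X : Fin κ) (i : Fin n) : CFml κ n
  | not {κ n : ℕ} : CFml κ n → CFml κ n
  | or {κ n : ℕ} : CFml κ n → CFml κ n → CFml κ n
  | ex {κ n : ℕ} : CFml κ (n + 1) → CFml κ n

/-- Satisfaction of such a formula in the structure whose domain is the class `D`,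
with class predicates interpreted by `Γ` and variable assignment `v`. -/
def SatC (D : Set ZFSet) : ∀ {κ n : ℕ}, (Fin κ → Set ZFSet) → CFml κ n → (Fin n → ZFSet) → Prop
  | _, _, _, .mem i j, v => v i ∈ v j
  | _, _, _, .eq i j, v => v i = v j
  | _, _, Γ, .cls X i, v => v i ∈ Γ X
  | _, _, Γ, .not φ, v => ¬ SatC D Γ φ v
  | _, _, Γ, .or φ ψ, v => SatC D Γ φ v ∨ SatC D Γ ψ v
  | _, _, Γ, .ex φ, v => ∃ x ∈ D, SatC D Γ φ (Fin.snoc v x)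

/-- Pure ∈-formulas with `n` free variables. -/
abbrev Fml (n : ℕ) : Type := CFml 0 n

/-- Satisfaction of an ∈-formula in `(M, ∈)` (quantifiers relativized to `M`). -/
def Sat (M : ZFSet) {n : ℕ} (φ : Fml n) (v : Fin n → ZFSet) : Prop :=
  SatC M.toSet (fun i => i.elim0) φ v

/-- A `k`-ary relation on `M` is definable (with parameters) over `(M, ∈)`. -/
def DefinableOver (M : ZFSet) {k : ℕ} (S : (Fin k → ZFSet) → Prop) : Prop :=
  ∃ (m : ℕ) (φ : Fml (k + m)) (a : Fin m → ZFSet), (∀ i, a i ∈ M) ∧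
    ∀ v : Fin k → ZFSet, (∀ i, v i ∈ M) → (S v ↔ Sat M φ (Fin.append v a))

/-- The collection of classes of `M` that are definable over `(M,∈)` with parameters. -/
def DefClasses (M : ZFSet) : Set (Set ZFSet) :=
  {S | S ⊆ M.toSet ∧ DefinableOver M (fun v : Fin 1 → ZFSet => v 0 ∈ S)}

/-- `M` is a countable transitive model of `ZF⁻` (`ZF` without the power set axiom,
with Collection instead of Replacement), stated semantically via
the closure conditions that satisfaction of the `ZF⁻`-axioms imposes on a
transitive set (Foundation is automatic for transitive sets). -/
structure IsCTM (M : ZFSet) : Prop where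
  countable : M.toSet.Countable
  transitive : M.IsTransitive
  empty_mem : (∅ : ZFSet) ∈ M
  pairing : ∀ x ∈ M, ∀ y ∈ M, ({x, y} : ZFSet) ∈ M
  union : ∀ x ∈ M, (ZFSet.sUnion x : ZFSet) ∈ M
  infinity : ZFSet.omega ∈ M
  separation : ∀ (m : ℕ) (φ : Fml (m + 1)) (a : Fin m → ZFSet), (∀ i, a i ∈ M) →
    ∀ x ∈ M, ZFSet.sep (fun y => Sat M φ (Fin.snoc a y)) x ∈ M
  collection : ∀ (m : ℕ) (φ : Fml (m + 2)) (a : Fin m → ZFSet), (∀ i, a i ∈ M) →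
    ∀ x ∈ M, (∀ y ∈ x, ∃ z ∈ M, Sat M φ (Fin.snoc (Fin.snoc a y) z)) →
      ∃ b ∈ M, ∀ y ∈ x, ∃ z ∈ b, Sat M φ (Fin.snoc (Fin.snoc a y) z)

/-- `x` is a (von Neumann) ordinal. -/
def IsOrdZ (x : ZFSet) : Prop := x.IsTransitive ∧ ∀ y ∈ x, ZFSet.IsTransitive y

/-- `α` is an ordinal of the model `M`. -/
def IsOrdIn (M α : ZFSet) : Prop := α ∈ M ∧ IsOrdZ α
/-- `f` is a (set-coded) function: a set of Kuratowski pairs which is functional. -/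
def isFuncZ (f : ZFSet) : Prop :=
  (∀ x ∈ f, ∃ a b : ZFSet, x = ZFSet.pair a b) ∧
  ∀ a b b' : ZFSet, ZFSet.pair a b ∈ f → ZFSet.pair a b' ∈ f → b = b'

/-- `f` is injective (as a set-coded relation). -/
def isInjZ (f : ZFSet) : Prop :=
  ∀ a a' b : ZFSet, ZFSet.pair a b ∈ f → ZFSet.pair a' b ∈ f → a = a'

/-- Domain of a set-coded relation. -/
def domZ (f : ZFSet) : Set ZFSet := {a | ∃ b, ZFSet.pair a b ∈ f}

/-- Range of a set-coded relation. -/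
def ranZ (f : ZFSet) : Set ZFSet := {b | ∃ a, ZFSet.pair a b ∈ f}

/-- A set-coded binary relation is acyclic iff its transitive closure is irreflexive. -/
def acyclicZ (e : ZFSet) : Prop :=
  ∀ a : ZFSet, ¬ Relation.TransGen (fun x y => ZFSet.pair x y ∈ e) a a

/-- The ordered triple `⟨d, e, f⟩`. -/
def tripleZ (d e f : ZFSet) : ZFSet := ZFSet.pair d (ZFSet.pair e f)
/-- The symbol `≥α`, coded as the set `⟨α, α⟩` (an element of `M` that is not an
ordinal, distinct for distinct `α`). -/
def geqSym (α : ZFSet) : ZFSet := ZFSet.pair α α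

/-- `Col_≥(ω, Ord)^M`: finite partial functions from `ω` into
`Ord^M ∪ {≥α ∣ α ∈ Ord^M}`. -/
def ColGeqP (M : ZFSet) : Set ZFSet :=
  {p | isFuncZ p ∧ p.toSet.Finite ∧ (∀ a, a ∈ domZ p → a ∈ ZFSet.omega) ∧
    (∀ b, b ∈ ranZ p → (IsOrdIn M b ∨ ∃ α, IsOrdIn M α ∧ b = geqSym α))}

/-- The ordering of `Col_≥(ω, Ord)^M`: `p ≤ q` iff `dom p ⊇ dom q` and for each
`n ∈ dom q` either `p(n) = q(n)`, or `q(n)` is `≥α` and `p(n) ∈ {β, ≥β}` for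
some `β ≥ α`. -/
def ColGeqLe (M : ZFSet) (p q : ZFSet) : Prop :=
  (∀ a, a ∈ domZ q → a ∈ domZ p) ∧
  ∀ n v : ZFSet, ZFSet.pair n v ∈ q →
    (ZFSet.pair n v ∈ p ∨
      ∃ α, IsOrdIn M α ∧ v = geqSym α ∧
        ∃ β, IsOrdIn M β ∧ (α = β ∨ α ∈ β) ∧
          (ZFSet.pair n β ∈ p ∨ ZFSet.pair n (geqSym β) ∈ p))

/-- `Col_≥(ω, α)`: the suborder of conditions with values in
`α ∪ {≥β ∣ β ≤ α}`. -/
def ColGeqBddP (α : ZFSet) : Set ZFSet :=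
  {p | isFuncZ p ∧ p.toSet.Finite ∧ (∀ a, a ∈ domZ p → a ∈ ZFSet.omega) ∧
    (∀ b, b ∈ ranZ p → (b ∈ α ∨ ∃ β : ZFSet, (β ∈ α ∨ β = α) ∧ b = geqSym β))}

/-!
A condition of `Col_≥(ω, Ord)^M` mentions only finitely many ordinals of `M`, so it lies in
`Col_≥(ω, α)` for any `α ∈ M` above them.

`Col_≥(ω, α)` is the set of partial functions from some `n ∈ ω` into the value set
`α ∪ {≥β ∣ β ≤ α}`, both of which are built inside `M` from Collection and Separation: by
induction on `n`, the partial functions on `n + 1` are one-point extensions of those on `n`,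
and all relations involved are first-order definable over `(M, ∈)`.

For completeness, send a condition `p` to the condition `π ∈ Col_≥(ω, α)` that replaces every
value of `p` outside `Col_≥(ω, α)` by `≥α`. If `r ≤ π` lies in `Col_≥(ω, α)`, then `r` still
has the value `≥α` at these places, so taking `p` there and `r` elsewhere gives a common
extension of `p` and `r`. Hence a maximal antichain of `Col_≥(ω, α)` stays predense.
-/

/-! ### Definable relations over `M` -/

namespace CFml

def rename : ∀ {κ n n' : ℕ}, (Fin n → Fin n') → CFml κ n → CFml κ n'
  | _, _, _, f, mem i j => mem (f i) (f j)
  | _, _, _, f, eq i j => eq (f i) (f j)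
  | _, _, _, f, cls X i => cls X (f i)
  | _, _, _, f, not φ => not (rename f φ)
  | _, _, _, f, or φ ψ => or (rename f φ) (rename f ψ)
  | _, _, _, f, ex φ => ex (rename (Fin.snoc (Fin.castSucc ∘ f) (Fin.last _)) φ)

end CFml

theorem satC_rename {D : Set ZFSet} {κ n n' : ℕ} {Γ : Fin κ → Set ZFSet} (φ : CFml κ n)
    (f : Fin n → Fin n') (v : Fin n' → ZFSet) :
    SatC D Γ (φ.rename f) v ↔ SatC D Γ φ (v ∘ f) := by
  induction φ generalizing n' with
  | mem i j | eq i j | cls X i => simp only [CFml.rename, SatC, Function.comp_apply]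
  | not φ ih => simp only [CFml.rename, SatC, ih]
  | or φ ψ ihφ ihψ => simp only [CFml.rename, SatC, ihφ, ihψ]
  | ex φ ih =>
    simp only [CFml.rename, SatC, ih, Fin.comp_snoc, ← Function.comp_assoc, Fin.snoc_comp_castSucc,
      Fin.snoc_last]

namespace DefinableOver

variable {M : ZFSet} {k : ℕ}

theorem of_iff {S T : (Fin k → ZFSet) → Prop} (hS : DefinableOver M S)
    (h : ∀ v : Fin k → ZFSet, (∀ i, v i ∈ M) → (S v ↔ T v)) : DefinableOver M T := by
  obtain ⟨m, φ, a, ha, hφ⟩ := hS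
  exact ⟨m, φ, a, ha, fun v hv => (h v hv).symm.trans (hφ v hv)⟩

theorem of_rename {S : (Fin k → ZFSet) → Prop} {m n : ℕ} (φ : Fml n) (ρ : Fin n → Fin (k + m))
    (a : Fin m → ZFSet) (ha : ∀ i, a i ∈ M)
    (h : ∀ v : Fin k → ZFSet, (∀ i, v i ∈ M) → (S v ↔ Sat M φ (Fin.append v a ∘ ρ))) :
    DefinableOver M S :=
  ⟨m, φ.rename ρ, a, ha, fun v hv => (h v hv).trans (satC_rename φ ρ _).symm⟩

theorem mem (i j : Fin k) : DefinableOver M (fun v => v i ∈ v j) :=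
  of_rename (.mem 0 1) ![Fin.castAdd 0 i, Fin.castAdd 0 j] Fin.elim0 (fun i => i.elim0)
    fun v _ => by simp [Sat, SatC]

theorem eq (i j : Fin k) : DefinableOver M (fun v => v i = v j) :=
  of_rename (.eq 0 1) ![Fin.castAdd 0 i, Fin.castAdd 0 j] Fin.elim0 (fun i => i.elim0)
    fun v _ => by simp [Sat, SatC]

theorem not {S : (Fin k → ZFSet) → Prop} (hS : DefinableOver M S) :
    DefinableOver M (fun v => ¬ S v) := by
  obtain ⟨m, φ, a, ha, hφ⟩ := hS
  exact ⟨m, .not φ, a, ha, fun v hv => by simp only [Sat, SatC] at hφ ⊢; rw [hφ v hv]⟩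

theorem or {S T : (Fin k → ZFSet) → Prop} (hS : DefinableOver M S) (hT : DefinableOver M T) :
    DefinableOver M (fun v => S v ∨ T v) := by
  obtain ⟨m, φ, a, ha, hφ⟩ := hS
  obtain ⟨m', ψ, a', ha', hψ⟩ := hT
  refine of_rename
    (.or (φ.rename (Fin.append (Fin.castAdd (m + m')) (Fin.natAdd k ∘ Fin.castAdd m')))
      (ψ.rename (Fin.append (Fin.castAdd (m + m')) (Fin.natAdd k ∘ Fin.natAdd m))))
    id (Fin.append a a')
    (fun i => Fin.addCases (fun i => by simpa using ha i) (fun i => by simpa using ha' i) i)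
    fun v hv => ?_
  have hl : Fin.append v (Fin.append a a') ∘
      Fin.append (Fin.castAdd (m + m')) (Fin.natAdd k ∘ Fin.castAdd m') = Fin.append v a := by
    funext i; refine Fin.addCases (fun i => ?_) (fun i => ?_) i <;> simp
  have hr : Fin.append v (Fin.append a a') ∘
      Fin.append (Fin.castAdd (m + m')) (Fin.natAdd k ∘ Fin.natAdd m) = Fin.append v a' := by
    funext i; refine Fin.addCases (fun i => ?_) (fun i => ?_) i <;> simp
  simp only [Sat, SatC, Function.comp_id, satC_rename, hl, hr] at hφ hψ ⊢
  rw [hφ v hv, hψ v hv]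

theorem and {S T : (Fin k → ZFSet) → Prop} (hS : DefinableOver M S) (hT : DefinableOver M T) :
    DefinableOver M (fun v => S v ∧ T v) :=
  (hS.not.or hT.not).not.of_iff fun _ _ => not_or.trans (and_congr not_not not_not)

theorem imp {S T : (Fin k → ZFSet) → Prop} (hS : DefinableOver M S) (hT : DefinableOver M T) :
    DefinableOver M (fun v => S v → T v) :=
  (hS.not.or hT).of_iff fun _ _ => imp_iff_not_or.symm

theorem iff {S T : (Fin k → ZFSet) → Prop} (hS : DefinableOver M S) (hT : DefinableOver M T) :
    DefinableOver M (fun v => S v ↔ T v) :=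
  ((hS.imp hT).and (hT.imp hS)).of_iff fun _ _ => iff_iff_implies_and_implies.symm

theorem exists_mem {S : (Fin (k + 1) → ZFSet) → Prop} (hS : DefinableOver M S) :
    DefinableOver M (fun v => ∃ x ∈ M, S (Fin.snoc v x)) := by
  obtain ⟨m, φ, a, ha, hφ⟩ := hS
  let ρ : Fin (k + 1 + m) → Fin (k + m + 1) :=
    Fin.append (Fin.snoc (Fin.castSucc ∘ Fin.castAdd m) (Fin.last (k + m)))
      (Fin.castSucc ∘ Fin.natAdd k)
  have hρ : ∀ (v : Fin k → ZFSet) x,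
      Fin.snoc (Fin.append v a) x ∘ ρ = Fin.append (Fin.snoc v x) a := by
    intro v x; funext i
    refine Fin.addCases (fun i => ?_) (fun i => ?_) i
    · refine Fin.lastCases ?_ (fun i => ?_) i <;> simp [ρ]
    · simp only [ρ, Fin.append_right, Function.comp_apply, Fin.snoc_castSucc]
  refine ⟨m, .ex (φ.rename ρ), a, ha, fun v hv => ?_⟩
  simp only [Sat, SatC, satC_rename, hρ] at hφ ⊢
  refine exists_congr fun x => and_congr_right fun hx => hφ _ fun i => ?_
  refine Fin.lastCases ?_ (fun i => ?_) i <;> simp [hx, hv]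

theorem forall_mem {S : (Fin (k + 1) → ZFSet) → Prop} (hS : DefinableOver M S) :
    DefinableOver M (fun v => ∀ x ∈ M, S (Fin.snoc v x)) :=
  hS.not.exists_mem.not.of_iff fun _ _ => by simp only [not_exists, not_and, not_not]

theorem comp {k' : ℕ} {S : (Fin k' → ZFSet) → Prop} (hS : DefinableOver M S) (f : Fin k' → Fin k) :
    DefinableOver M (fun v => S (v ∘ f)) := by
  obtain ⟨m, φ, a, ha, hφ⟩ := hS
  refine of_rename φ (Fin.append (Fin.castAdd m ∘ f) (Fin.natAdd k)) a ha fun v hv => ?_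
  have hρ :
      Fin.append v a ∘ Fin.append (Fin.castAdd m ∘ f) (Fin.natAdd k) = Fin.append (v ∘ f) a := by
    funext i; refine Fin.addCases (fun i => ?_) (fun i => ?_) i <;> simp
  rw [hρ]
  exact hφ _ fun i => hv _

theorem snoc_const {S : (Fin (k + 1) → ZFSet) → Prop} (hS : DefinableOver M S) {c : ZFSet}
    (hc : c ∈ M) : DefinableOver M (fun v => S (Fin.snoc v c)) := by
  obtain ⟨m, φ, a, ha, hφ⟩ := hS
  let ρ : Fin (k + 1 + m) → Fin (k + (m + 1)) :=
    Fin.append (Fin.snoc (Fin.castAdd (m + 1)) (Fin.natAdd k 0)) (Fin.natAdd k ∘ Fin.succ)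
  have hρ : ∀ v : Fin k → ZFSet, Fin.append v (Fin.cons c a) ∘ ρ = Fin.append (Fin.snoc v c) a := by
    intro v; funext i
    refine Fin.addCases (fun i => ?_) (fun i => ?_) i
    · refine Fin.lastCases ?_ (fun i => ?_) i <;> simp [ρ]
    · simp [ρ]
  refine of_rename φ ρ (Fin.cons c a) (fun i => Fin.cases hc ha i) fun v hv => ?_
  rw [hρ]
  refine hφ _ fun i => ?_
  refine Fin.lastCases ?_ (fun i => ?_) i <;> simp [hc, hv]

end DefinableOver

/-! ### Closure properties of `M` -/

namespace IsCTM

variable {M : ZFSet}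

theorem mem_of_mem (hM : IsCTM M) {x y : ZFSet} (hx : x ∈ y) (hy : y ∈ M) : x ∈ M :=
  hM.transitive.mem_trans hx hy

theorem singleton_mem (hM : IsCTM M) {x : ZFSet} (hx : x ∈ M) : ({x} : ZFSet) ∈ M := by
  simpa using hM.pairing x hx x hx

theorem union_mem (hM : IsCTM M) {x y : ZFSet} (hx : x ∈ M) (hy : y ∈ M) : x ∪ y ∈ M := by
  simpa using hM.union _ (hM.pairing x hx y hy)

theorem insert_mem (hM : IsCTM M) {x y : ZFSet} (hx : x ∈ M) (hy : y ∈ M) : insert x y ∈ M := by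
  have h : insert x y = {x} ∪ y := by ext; simp
  exact h ▸ hM.union_mem (hM.singleton_mem hx) hy

theorem pair_mem (hM : IsCTM M) {x y : ZFSet} (hx : x ∈ M) (hy : y ∈ M) : ZFSet.pair x y ∈ M :=
  hM.pairing _ (hM.singleton_mem hx) _ (hM.pairing x hx y hy)

theorem mem_of_pair_mem (hM : IsCTM M) {x y z : ZFSet} (h : ZFSet.pair x y ∈ z) (hz : z ∈ M) :
    x ∈ M ∧ y ∈ M := by
  have hxy : ({x, y} : ZFSet) ∈ M :=
    hM.mem_of_mem (by rw [ZFSet.pair]; exact ZFSet.mem_pair.2 (Or.inr rfl)) (hM.mem_of_mem h hz)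
  exact ⟨hM.mem_of_mem (ZFSet.mem_pair.2 (Or.inl rfl)) hxy,
    hM.mem_of_mem (ZFSet.mem_pair.2 (Or.inr rfl)) hxy⟩

theorem eq_iff_forall_mem (hM : IsCTM M) {x y : ZFSet} (hx : x ∈ M) (hy : y ∈ M) :
    x = y ↔ ∀ u ∈ M, (u ∈ x ↔ u ∈ y) :=
  ⟨fun h _ _ => h ▸ Iff.rfl, fun h => ZFSet.ext fun u =>
    ⟨fun hu => (h u (hM.mem_of_mem hu hx)).1 hu, fun hu => (h u (hM.mem_of_mem hu hy)).2 hu⟩⟩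

theorem sep_mem (hM : IsCTM M) {P : ZFSet → Prop}
    (hP : DefinableOver M (fun v : Fin 1 → ZFSet => P (v 0))) {x : ZFSet} (hx : x ∈ M) :
    ZFSet.sep P x ∈ M := by
  obtain ⟨m, φ, a, ha, hφ⟩ := hP
  let ρ : Fin (1 + m) → Fin (m + 1) := Fin.append ![Fin.last m] Fin.castSucc
  have hρ : ∀ y, Fin.snoc a y ∘ ρ = Fin.append ![y] a := by
    intro y; funext i
    refine Fin.addCases (fun i => ?_) (fun i => ?_) i
    · simp [ρ, Fin.snoc_last]
    · simp only [ρ, Fin.append_right, Function.comp_apply, Fin.snoc_castSucc]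
  convert hM.separation m (φ.rename ρ) a ha x hx using 1
  ext y
  simp only [ZFSet.mem_sep, Sat, satC_rename, hρ]
  exact and_congr_right fun hy => hφ ![y] fun i => by simpa using hM.mem_of_mem hy hx

theorem exists_collect (hM : IsCTM M) {R : ZFSet → ZFSet → Prop}
    (hR : DefinableOver M (fun v : Fin 2 → ZFSet => R (v 0) (v 1))) {x : ZFSet} (hx : x ∈ M)
    (h : ∀ y ∈ x, ∃ z ∈ M, R y z) : ∃ b ∈ M, ∀ y ∈ x, ∃ z ∈ b, R y z := by
  obtain ⟨m, φ, a, ha, hφ⟩ := hR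
  let ρ : Fin (2 + m) → Fin (m + 2) :=
    Fin.append ![(Fin.last m).castSucc, Fin.last (m + 1)] (Fin.castSucc ∘ Fin.castSucc)
  have hρ : ∀ y z, Fin.snoc (Fin.snoc a y) z ∘ ρ = Fin.append ![y, z] a := by
    intro y z; funext i
    refine Fin.addCases (fun i => ?_) (fun i => ?_) i
    · fin_cases i <;> simp [ρ]
    · simp only [ρ, Fin.append_right, Function.comp_apply, Fin.snoc_castSucc]
  have hsat : ∀ y ∈ x, ∀ z ∈ M, R y z ↔ Sat M (φ.rename ρ) (Fin.snoc (Fin.snoc a y) z) := by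
    intro y hy z hz
    simp only [Sat, satC_rename, hρ]
    exact hφ ![y, z] fun i => by fin_cases i <;> simp [hM.mem_of_mem hy hx, hz]
  obtain ⟨b, hb, hbx⟩ := hM.collection m (φ.rename ρ) a ha x hx fun y hy => by
    obtain ⟨z, hz, hR⟩ := h y hy
    exact ⟨z, hz, (hsat y hy z hz).1 hR⟩
  refine ⟨b, hb, fun y hy => ?_⟩
  obtain ⟨z, hzb, hz⟩ := hbx y hy
  exact ⟨z, hzb, (hsat y hy z (hM.mem_of_mem hzb hb)).2 hz⟩

theorem exists_mem_iff_of_bounded (hM : IsCTM M) {P : ZFSet → Prop}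
    (hP : DefinableOver M (fun v : Fin 1 → ZFSet => P (v 0))) {x : ZFSet} (hx : x ∈ M)
    (hPx : ∀ y, P y → y ∈ x) : ∃ z ∈ M, ∀ y, y ∈ z ↔ P y :=
  ⟨_, hM.sep_mem hP hx, fun y => by rw [ZFSet.mem_sep]; exact ⟨And.right, fun h => ⟨hPx y h, h⟩⟩⟩

theorem exists_image_subset (hM : IsCTM M) {f : ZFSet → ZFSet}
    (hf : DefinableOver M (fun v : Fin 2 → ZFSet => v 1 = f (v 0))) {x : ZFSet} (hx : x ∈ M)
    (hfM : ∀ y ∈ x, f y ∈ M) : ∃ b ∈ M, ∀ y ∈ x, f y ∈ b := by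
  obtain ⟨b, hb, hbx⟩ :=
    hM.exists_collect (R := fun y z => z = f y) hf hx fun y hy => ⟨f y, hfM y hy, rfl⟩
  exact ⟨b, hb, fun y hy => by obtain ⟨z, hz, rfl⟩ := hbx y hy; exact hz⟩

end IsCTM

/-! ### `Col_≥(ω, α)` is an element of `M` -/

def IsPFunZ (n T p : ZFSet) : Prop :=
  isFuncZ p ∧ ∀ a c, ZFSet.pair a c ∈ p → a ∈ n ∧ c ∈ T

def IsColGeqBddVal (α b : ZFSet) : Prop :=
  b ∈ α ∨ ∃ β, (β ∈ α ∨ β = α) ∧ b = geqSym β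

-- A quantifier binds the new variable `Fin.last k` and the outer ones become `Fin.castSucc i`;
-- `snoc_const` fixes the last variable to a parameter in the same way.
section Definability

open DefinableOver

variable {M : ZFSet} {k : ℕ}

theorem IsCTM.definableOver_eq_singleton (hM : IsCTM M) (i j : Fin k) :
    DefinableOver M (fun v => v i = {v j}) :=
  ((mem (Fin.last k) i.castSucc).iff (eq (Fin.last k) j.castSucc)).forall_mem.of_iff fun v hv => by
    simp only [Fin.snoc_last, Fin.snoc_castSucc, ZFSet.mem_singleton,
      hM.eq_iff_forall_mem (hv i) (hM.singleton_mem (hv j))]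

theorem IsCTM.definableOver_eq_pairSet (hM : IsCTM M) (i j l : Fin k) :
    DefinableOver M (fun v => v i = {v j, v l}) :=
  ((mem (Fin.last k) i.castSucc).iff ((eq (Fin.last k) j.castSucc).or
    (eq (Fin.last k) l.castSucc))).forall_mem.of_iff fun v hv => by
    simp only [Fin.snoc_last, Fin.snoc_castSucc,
      hM.eq_iff_forall_mem (hv i) (hM.pairing _ (hv j) _ (hv l)), ZFSet.mem_pair]

theorem IsCTM.definableOver_eq_pair (hM : IsCTM M) (i j l : Fin k) :
    DefinableOver M (fun v => v i = ZFSet.pair (v j) (v l)) :=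
  ((mem (Fin.last k) i.castSucc).iff ((hM.definableOver_eq_singleton (Fin.last k) j.castSucc).or
    (hM.definableOver_eq_pairSet (Fin.last k) j.castSucc l.castSucc))).forall_mem.of_iff
    fun v hv => by
      rw [hM.eq_iff_forall_mem (hv i) (hM.pair_mem (hv j) (hv l))]
      simp only [Fin.snoc_last, Fin.snoc_castSucc, ZFSet.pair, ZFSet.mem_pair]

theorem IsCTM.definableOver_pair_mem (hM : IsCTM M) (i j l : Fin k) :
    DefinableOver M (fun v => ZFSet.pair (v i) (v j) ∈ v l) :=
  ((hM.definableOver_eq_pair (Fin.last k) i.castSucc j.castSucc).and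
    (mem (Fin.last k) l.castSucc)).exists_mem.of_iff fun v hv => by
    simp only [Fin.snoc_last, Fin.snoc_castSucc]
    exact ⟨fun ⟨_, _, h, hl⟩ => h ▸ hl, fun h => ⟨_, hM.pair_mem (hv i) (hv j), rfl, h⟩⟩

theorem IsCTM.isFuncZ_iff (hM : IsCTM M) {p : ZFSet} (hp : p ∈ M) :
    isFuncZ p ↔ (∀ x ∈ M, x ∈ p → ∃ a ∈ M, ∃ b ∈ M, x = ZFSet.pair a b) ∧
      ∀ a ∈ M, ∀ b ∈ M, ∀ b' ∈ M, ZFSet.pair a b ∈ p → ZFSet.pair a b' ∈ p → b = b' := by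
  refine and_congr ⟨fun h x _ hx => ?_, fun h x hx => ?_⟩
    ⟨fun h a _ b _ b' _ => h a b b', fun h a b b' hb hb' => ?_⟩
  · obtain ⟨a, b, rfl⟩ := h x hx
    obtain ⟨ha, hb⟩ := hM.mem_of_pair_mem hx hp
    exact ⟨a, ha, b, hb, rfl⟩
  · obtain ⟨a, -, b, -, e⟩ := h x (hM.mem_of_mem hx hp) hx
    exact ⟨a, b, e⟩
  · obtain ⟨ha, hbM⟩ := hM.mem_of_pair_mem hb hp
    exact h a ha b hbM b' (hM.mem_of_pair_mem hb' hp).2 hb hb'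

theorem IsCTM.definableOver_isFuncZ (hM : IsCTM M) (i : Fin k) :
    DefinableOver M (fun v => isFuncZ (v i)) :=
  (((mem (Fin.last k) i.castSucc).imp (hM.definableOver_eq_pair (Fin.last k).castSucc.castSucc
      (Fin.last (k + 1)).castSucc (Fin.last (k + 2))).exists_mem.exists_mem).forall_mem.and
    (((hM.definableOver_pair_mem (Fin.last k).castSucc.castSucc (Fin.last (k + 1)).castSucc
        i.castSucc.castSucc.castSucc).and
      (hM.definableOver_pair_mem (Fin.last k).castSucc.castSucc (Fin.last (k + 2))
        i.castSucc.castSucc.castSucc)).imp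
      (eq (Fin.last (k + 1)).castSucc (Fin.last (k + 2)))).forall_mem.forall_mem.forall_mem).of_iff
    fun v hv => by
      simpa only [Fin.snoc_last, Fin.snoc_castSucc, and_imp] using (hM.isFuncZ_iff (hv i)).symm

theorem IsCTM.definableOver_isPFunZ (hM : IsCTM M) (i j l : Fin k) :
    DefinableOver M (fun v => IsPFunZ (v i) (v j) (v l)) :=
  ((hM.definableOver_isFuncZ l).and
    ((hM.definableOver_pair_mem (Fin.last k).castSucc (Fin.last (k + 1)) l.castSucc.castSucc).imp
      ((mem (Fin.last k).castSucc i.castSucc.castSucc).and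
        (mem (Fin.last (k + 1)) j.castSucc.castSucc))).forall_mem.forall_mem).of_iff
    fun v hv => by
      simp only [Fin.snoc_last, Fin.snoc_castSucc]
      refine and_congr Iff.rfl ⟨fun h a c hac => ?_, fun h a _ c _ => h a c⟩
      obtain ⟨ha, hc⟩ := hM.mem_of_pair_mem hac (hv l)
      exact h a ha c hc hac

theorem IsCTM.definableOver_isColGeqBddVal (hM : IsCTM M) (i j : Fin k) :
    DefinableOver M (fun v => IsColGeqBddVal (v i) (v j)) :=
  ((mem j i).or (((mem (Fin.last k) i.castSucc).or (eq (Fin.last k) i.castSucc)).and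
    (hM.definableOver_eq_pair j.castSucc (Fin.last k) (Fin.last k))).exists_mem).of_iff
    fun v hv => by
      simp only [Fin.snoc_last, Fin.snoc_castSucc]
      refine or_congr Iff.rfl ⟨fun ⟨β, _, h⟩ => ⟨β, h⟩, ?_⟩
      rintro ⟨β, hβ, hj⟩
      refine ⟨β, ?_, hβ, hj⟩
      rcases hβ with hβ | rfl
      exacts [hM.mem_of_mem hβ (hv i), hv i]

theorem IsCTM.definableOver_eq_insert_pair (hM : IsCTM M) (i j l q : Fin k) :
    DefinableOver M (fun v => v i = insert (ZFSet.pair (v j) (v l)) (v q)) :=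
  ((mem (Fin.last k) i.castSucc).iff
    ((hM.definableOver_eq_pair (Fin.last k) j.castSucc l.castSucc).or
      (mem (Fin.last k) q.castSucc))).forall_mem.of_iff fun v hv => by
    rw [hM.eq_iff_forall_mem (hv i) (hM.insert_mem (hM.pair_mem (hv j) (hv l)) (hv q))]
    simp only [Fin.snoc_last, Fin.snoc_castSucc, ZFSet.mem_insert_iff]

end Definability

def natZ (k : ℕ) : ZFSet := ZFSet.mk (PSet.ofNat k)

theorem natZ_succ (k : ℕ) : natZ (k + 1) = insert (natZ k) (natZ k) := rfl

theorem mem_omega_iff {x : ZFSet} : x ∈ ZFSet.omega ↔ ∃ k, x = natZ k := by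
  induction x using Quotient.inductionOn with
  | h x => exact ⟨fun ⟨⟨k⟩, h⟩ => ⟨k, ZFSet.sound h⟩, fun ⟨k, h⟩ => h ▸ ⟨⟨k⟩, PSet.Equiv.rfl⟩⟩

theorem natZ_mem_omega (k : ℕ) : natZ k ∈ ZFSet.omega := mem_omega_iff.2 ⟨k, rfl⟩

theorem mem_natZ_iff {x : ZFSet} {k : ℕ} : x ∈ natZ k ↔ ∃ j < k, x = natZ j := by
  induction k with
  | zero => exact iff_of_false (ZFSet.notMem_empty x) (by simp)
  | succ k ih =>
    rw [natZ_succ, ZFSet.mem_insert_iff, ih]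
    constructor
    · rintro (rfl | ⟨j, hj, rfl⟩)
      exacts [⟨k, k.lt_succ_self, rfl⟩, ⟨j, by omega, rfl⟩]
    · rintro ⟨j, hj, rfl⟩
      rcases (Nat.lt_succ_iff_lt_or_eq.1 hj) with hj | rfl
      exacts [Or.inr ⟨j, hj, rfl⟩, Or.inl rfl]

theorem exists_subset_natZ {s : Set ZFSet} (hs : s.Finite) (hω : ∀ x ∈ s, x ∈ ZFSet.omega) :
    ∃ k, ∀ x ∈ s, x ∈ natZ k := by
  choose! j hj using fun x hx => mem_omega_iff.1 (hω x hx)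
  obtain ⟨N, hN⟩ := (hs.image j).bddAbove
  exact ⟨N + 1, fun x hx => mem_natZ_iff.2 ⟨j x, Nat.lt_succ_of_le (hN ⟨x, hx, rfl⟩), hj x hx⟩⟩

theorem domZ_finite {p : ZFSet} (hp : p.toSet.Finite) : (domZ p).Finite :=
  ((hp.preimage ZFSet.pair_injective.uncurry.injOn).image Prod.fst).subset
    fun a ⟨b, hb⟩ => ⟨(a, b), hb, rfl⟩

theorem ranZ_finite {p : ZFSet} (hp : p.toSet.Finite) : (ranZ p).Finite :=
  ((hp.preimage ZFSet.pair_injective.uncurry.injOn).image Prod.snd).subset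
    fun b ⟨a, ha⟩ => ⟨(a, b), ha, rfl⟩

namespace IsPFunZ

variable {n T p : ZFSet}

theorem eq_empty (h : IsPFunZ ∅ T p) : p = ∅ :=
  (ZFSet.eq_empty p).2 fun w hw => by
    obtain ⟨a, c, rfl⟩ := h.1.1 w hw
    exact ZFSet.notMem_empty a (h.2 a c hw).1

theorem insert_cases (h : IsPFunZ (insert n n) T p) :
    IsPFunZ n T p ∨ ∃ t ∈ T, ∃ q, IsPFunZ n T q ∧ p = insert (ZFSet.pair n t) q := by
  by_cases hn : ∃ t, ZFSet.pair n t ∈ p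
  · obtain ⟨t, ht⟩ := hn
    refine Or.inr ⟨t, (h.2 n t ht).2, ZFSet.sep (· ≠ ZFSet.pair n t) p, ⟨⟨?_, ?_⟩, ?_⟩, ?_⟩
    · exact fun w hw => h.1.1 w (ZFSet.mem_sep.1 hw).1
    · exact fun a b b' hb hb' => h.1.2 a b b' (ZFSet.mem_sep.1 hb).1 (ZFSet.mem_sep.1 hb').1
    · intro a c hac
      obtain ⟨hacp, hne⟩ := ZFSet.mem_sep.1 hac
      obtain ⟨ha, hc⟩ := h.2 a c hacp
      refine ⟨(ZFSet.mem_insert_iff.1 ha).resolve_left ?_, hc⟩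
      rintro rfl
      exact hne (by rw [h.1.2 a c t hacp ht])
    · ext w
      rw [ZFSet.mem_insert_iff, ZFSet.mem_sep]
      by_cases hw : w = ZFSet.pair n t
      · simp [hw, ht]
      · simp [hw]
  · refine Or.inl ⟨h.1, fun a c hac => ⟨?_, (h.2 a c hac).2⟩⟩
    refine (ZFSet.mem_insert_iff.1 (h.2 a c hac).1).resolve_left ?_
    rintro rfl
    exact hn ⟨c, hac⟩

theorem finite {k : ℕ} (h : IsPFunZ (natZ k) T p) : p.toSet.Finite := by
  induction k generalizing p with
  | zero => exact Set.finite_empty.subset fun w hw => ZFSet.notMem_empty w (h.eq_empty ▸ hw)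
  | succ k ih =>
    rcases (natZ_succ k ▸ h).insert_cases with h | ⟨t, -, q, hq, rfl⟩
    · exact ih h
    · exact ((ih hq).insert _).subset fun w hw => ZFSet.mem_insert_iff.1 hw

end IsPFunZ

theorem mem_colGeqBddP_iff {α T p : ZFSet} (hT : ∀ b, b ∈ T ↔ IsColGeqBddVal α b) :
    p ∈ ColGeqBddP α ↔ ∃ n ∈ ZFSet.omega, IsPFunZ n T p := by
  constructor
  · rintro ⟨hfun, hfin, hdom, hran⟩
    obtain ⟨k, hk⟩ := exists_subset_natZ (domZ_finite hfin) hdom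
    exact ⟨natZ k, natZ_mem_omega k, hfun, fun a c hac =>
      ⟨hk a ⟨c, hac⟩, (hT c).2 (hran c ⟨a, hac⟩)⟩⟩
  · rintro ⟨n, hn, hp⟩
    obtain ⟨k, rfl⟩ := mem_omega_iff.1 hn
    refine ⟨hp.1, hp.finite, fun a ⟨c, hac⟩ => ?_, fun c ⟨a, hac⟩ => (hT c).1 (hp.2 a c hac).2⟩
    obtain ⟨j, -, rfl⟩ := mem_natZ_iff.1 (hp.2 a c hac).1
    exact natZ_mem_omega j

section Construction

open DefinableOver

variable {M : ZFSet}

theorem IsCTM.exists_image2_subset (hM : IsCTM M) {f : ZFSet → ZFSet → ZFSet}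
    (hf : DefinableOver M (fun v : Fin 3 → ZFSet => v 2 = f (v 0) (v 1))) {x y : ZFSet}
    (hx : x ∈ M) (hy : y ∈ M) (hfM : ∀ a ∈ M, ∀ c ∈ M, f a c ∈ M) :
    ∃ b ∈ M, ∀ a ∈ x, ∀ c ∈ y, f a c ∈ b := by
  have hrow : ∀ a ∈ x, ∃ w ∈ M, ∀ c ∈ y, f a c ∈ w := fun a ha =>
    hM.exists_image_subset (((hf.comp ![2, 0, 1]).snoc_const (hM.mem_of_mem ha hx)).of_iff
      fun v _ => by simp [Fin.snoc]) hy fun c hc =>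
      hfM a (hM.mem_of_mem ha hx) c (hM.mem_of_mem hc hy)
  have hR : DefinableOver M (fun v : Fin 2 → ZFSet => ∀ c ∈ y, f (v 0) c ∈ v 1) :=
    (((mem 3 2).imp ((hf.comp ![0, 3, 4]).and (mem 4 1)).exists_mem).forall_mem.snoc_const
      hy).of_iff fun v hv => by
        have hM' : ∀ c ∈ y, f (v 0) c ∈ M := fun c hc => hfM _ (hv 0) c (hM.mem_of_mem hc hy)
        simpa [Fin.snoc] using ⟨fun h c hc => (h c (hM.mem_of_mem hc hy) hc).2,
          fun h c _ hc => ⟨hM' c hc, h c hc⟩⟩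
  obtain ⟨B, hB, hBx⟩ := hM.exists_collect hR hx hrow
  refine ⟨ZFSet.sUnion B, hM.union _ hB, fun a ha c hc => ?_⟩
  obtain ⟨w, hwB, hw⟩ := hBx a ha
  exact ZFSet.mem_sUnion.2 ⟨w, hwB, hw c hc⟩

theorem IsCTM.exists_isPFunZ_superset (hM : IsCTM M) {T : ZFSet} (hT : T ∈ M) (k : ℕ) :
    ∃ z ∈ M, ∀ p, IsPFunZ (natZ k) T p → p ∈ z := by
  induction k with
  | zero =>
    exact ⟨{∅}, hM.singleton_mem hM.empty_mem, fun p hp => ZFSet.mem_singleton.2 hp.eq_empty⟩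
  | succ k ih =>
    obtain ⟨z, hz, hpz⟩ := ih
    have hk : natZ k ∈ M := hM.mem_of_mem (natZ_mem_omega k) hM.infinity
    obtain ⟨b, hb, hbz⟩ :=
      hM.exists_image2_subset (f := fun q t => insert (ZFSet.pair (natZ k) t) q)
        (((hM.definableOver_eq_insert_pair (2 : Fin 3).castSucc (Fin.last 3) (1 : Fin 3).castSucc
          (0 : Fin 3).castSucc).snoc_const hk).of_iff fun v _ => by
            simp only [Fin.snoc_castSucc, Fin.snoc_last])
        hz hT fun q hq t ht => hM.insert_mem (hM.pair_mem hk ht) hq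
    refine ⟨z ∪ b, hM.union_mem hz hb, fun p hp => ?_⟩
    rcases (natZ_succ k ▸ hp).insert_cases with hp | ⟨t, ht, q, hq, rfl⟩
    · exact ZFSet.mem_union.2 (Or.inl (hpz p hp))
    · exact ZFSet.mem_union.2 (Or.inr (hbz q (hpz q hq) t ht))

theorem IsCTM.mem_of_isPFunZ (hM : IsCTM M) {n T p : ZFSet} (hT : T ∈ M)
    (hn : n ∈ ZFSet.omega) (hp : IsPFunZ n T p) : p ∈ M := by
  obtain ⟨k, rfl⟩ := mem_omega_iff.1 hn
  obtain ⟨z, hz, hpz⟩ := hM.exists_isPFunZ_superset hT k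
  exact hM.mem_of_mem (hpz p hp) hz

theorem IsCTM.exists_mem_iff_isColGeqBddVal (hM : IsCTM M) {α : ZFSet} (hα : α ∈ M) :
    ∃ T ∈ M, ∀ b, b ∈ T ↔ IsColGeqBddVal α b := by
  have hsucc : insert α α ∈ M := hM.insert_mem hα hα
  obtain ⟨c, hc, hgeq⟩ := hM.exists_image_subset (f := geqSym)
    ((hM.definableOver_eq_pair 1 0 0).of_iff fun _ _ => Iff.rfl) hsucc fun β hβ =>
      hM.pair_mem (hM.mem_of_mem hβ hsucc) (hM.mem_of_mem hβ hsucc)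
  refine hM.exists_mem_iff_of_bounded
    (((hM.definableOver_isColGeqBddVal (Fin.last 1) (0 : Fin 1).castSucc).snoc_const hα).of_iff
      fun v _ => by simp only [Fin.snoc_castSucc, Fin.snoc_last])
    (hM.union_mem hα hc) fun b hb => ZFSet.mem_union.2 ?_
  rcases hb with hb | ⟨β, hβ, rfl⟩
  exacts [Or.inl hb, Or.inr (hgeq β (ZFSet.mem_insert_iff.2 hβ.symm))]

theorem IsCTM.exists_toSet_eq_colGeqBddP (hM : IsCTM M) {α : ZFSet} (hα : α ∈ M) :
    ∃ s ∈ M, s.toSet = ColGeqBddP α := by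
  obtain ⟨T, hT, hTα⟩ := hM.exists_mem_iff_isColGeqBddVal hα
  have hR : DefinableOver M (fun v : Fin 2 → ZFSet => ∀ p ∈ M, IsPFunZ (v 0) T p → p ∈ v 1) :=
    (((hM.definableOver_isPFunZ (0 : Fin 2).castSucc.castSucc (Fin.last 2).castSucc
      (Fin.last 3)).imp (mem (Fin.last 3) (1 : Fin 2).castSucc.castSucc)).forall_mem.snoc_const
        hT).of_iff fun v _ => by simp only [Fin.snoc_castSucc, Fin.snoc_last]
  obtain ⟨b, hb, hbω⟩ := hM.exists_collect (R := fun n z => ∀ p ∈ M, IsPFunZ n T p → p ∈ z) hR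
      hM.infinity fun n hn => by
    obtain ⟨k, rfl⟩ := mem_omega_iff.1 hn
    obtain ⟨z, hz, hpz⟩ := hM.exists_isPFunZ_superset hT k
    exact ⟨z, hz, fun p _ hp => hpz p hp⟩
  have hP : DefinableOver M (fun v : Fin 1 → ZFSet => ∃ n ∈ ZFSet.omega, IsPFunZ n T (v 0)) :=
    ((((mem (Fin.last 3) (Fin.last 1).castSucc.castSucc).and
      (hM.definableOver_isPFunZ (Fin.last 3) (Fin.last 2).castSucc
        (0 : Fin 1).castSucc.castSucc.castSucc)).exists_mem.snoc_const hT).snoc_const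
          hM.infinity).of_iff fun v _ => by
      simp only [Fin.snoc_castSucc, Fin.snoc_last]
      exact ⟨fun ⟨n, _, h⟩ => ⟨n, h⟩, fun ⟨n, hn, h⟩ => ⟨n, hM.mem_of_mem hn hM.infinity, hn, h⟩⟩
  obtain ⟨s, hs, hsP⟩ :=
    hM.exists_mem_iff_of_bounded (P := fun p => ∃ n ∈ ZFSet.omega, IsPFunZ n T p) hP
      (hM.union _ hb) fun p ⟨n, hn, hp⟩ => by
    obtain ⟨z, hzb, hz⟩ := hbω n hn
    exact ZFSet.mem_sUnion.2 ⟨z, hzb, hz p (hM.mem_of_isPFunZ hT hn hp) hp⟩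
  exact ⟨s, hs, Set.ext fun p => (hsP p).trans (mem_colGeqBddP_iff hTα).symm⟩

end Construction

/-! ### Values and the ordering -/

theorem isOrdZ_iff_isOrdinal {x : ZFSet} : IsOrdZ x ↔ x.IsOrdinal :=
  ZFSet.isOrdinal_iff_forall_mem_isTransitive.symm

theorem IsOrdZ.mem {α x : ZFSet} (hα : IsOrdZ α) (hx : x ∈ α) : IsOrdZ x :=
  isOrdZ_iff_isOrdinal.2 ((isOrdZ_iff_isOrdinal.1 hα).mem hx)

theorem geqSym_injective : Function.Injective geqSym := fun _ _ h => (ZFSet.pair_inj.1 h).1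

theorem IsOrdZ.ne_geqSym {o : ZFSet} (ho : IsOrdZ o) (γ : ZFSet) : o ≠ geqSym γ := by
  rintro rfl
  have hγ : γ ∈ geqSym γ :=
    ho.1.mem_trans (ZFSet.mem_singleton.2 rfl) (by simp [geqSym, ZFSet.pair])
  have : γ = {γ} := by simpa [geqSym, ZFSet.pair, ZFSet.pair_eq_singleton] using hγ
  have hself : γ ∈ ({γ} : ZFSet) := ZFSet.mem_singleton.2 rfl
  rw [← this] at hself
  exact ZFSet.mem_irrefl γ hself

def IsColGeqVal (M b : ZFSet) : Prop :=
  IsOrdIn M b ∨ ∃ α, IsOrdIn M α ∧ b = geqSym α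

def ColGeqValLe (M v' v : ZFSet) : Prop :=
  v' = v ∨ ∃ α, IsOrdIn M α ∧ v = geqSym α ∧
    ∃ β, IsOrdIn M β ∧ (α = β ∨ α ∈ β) ∧ (v' = β ∨ v' = geqSym β)

theorem eq_or_mem_trans {α β γ : ZFSet} (hγ : IsOrdZ γ) (hαβ : α = β ∨ α ∈ β)
    (hβγ : β = γ ∨ β ∈ γ) : α = γ ∨ α ∈ γ := by
  rcases hαβ with rfl | hαβ
  · exact hβγ
  · rcases hβγ with rfl | hβγ
    exacts [Or.inr hαβ, Or.inr (hγ.1.mem_trans hαβ hβγ)]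

theorem colGeqLe_iff {M p q : ZFSet} :
    ColGeqLe M p q ↔
      ∀ n v, ZFSet.pair n v ∈ q → ∃ v', ZFSet.pair n v' ∈ p ∧ ColGeqValLe M v' v := by
  constructor
  · rintro ⟨-, h⟩ n v hv
    rcases h n v hv with h | ⟨α, hα, rfl, β, hβ, hle, h | h⟩
    exacts [⟨v, h, Or.inl rfl⟩, ⟨β, h, Or.inr ⟨α, hα, rfl, β, hβ, hle, Or.inl rfl⟩⟩,
      ⟨_, h, Or.inr ⟨α, hα, rfl, β, hβ, hle, Or.inr rfl⟩⟩]
  · intro h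
    refine ⟨fun n ⟨v, hv⟩ => ?_, fun n v hv => ?_⟩
    · obtain ⟨v', hv', -⟩ := h n v hv
      exact ⟨v', hv'⟩
    · obtain ⟨v', hv', rfl | ⟨α, hα, rfl, β, hβ, hle, rfl | rfl⟩⟩ := h n v hv
      exacts [Or.inl hv', Or.inr ⟨α, hα, rfl, _, hβ, hle, Or.inl hv'⟩,
        Or.inr ⟨α, hα, rfl, _, hβ, hle, Or.inr hv'⟩]

theorem ColGeqValLe.trans {M v'' v' v : ZFSet} (h₁ : ColGeqValLe M v'' v')
    (h₂ : ColGeqValLe M v' v) : ColGeqValLe M v'' v := by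
  rcases h₂ with rfl | ⟨α, hα, rfl, β, hβ, hαβ, hv'⟩
  · exact h₁
  rcases h₁ with rfl | ⟨α', -, rfl, β', hβ', hαβ', hv''⟩
  · exact Or.inr ⟨α, hα, rfl, β, hβ, hαβ, hv'⟩
  have hβα' : β = α' := by
    rcases hv' with h | h
    · exact (hβ.2.ne_geqSym α' h.symm).elim
    · exact geqSym_injective h.symm
  subst hβα'
  exact Or.inr ⟨α, hα, rfl, β', hβ', eq_or_mem_trans hβ'.2 hαβ hαβ', hv''⟩

theorem colGeqLe_trans {M s r q : ZFSet} (hsr : ColGeqLe M s r) (hrq : ColGeqLe M r q) :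
    ColGeqLe M s q := by
  rw [colGeqLe_iff] at *
  intro n v hv
  obtain ⟨v', hv', hle⟩ := hrq n v hv
  obtain ⟨v'', hv'', hle'⟩ := hsr n v' hv'
  exact ⟨v'', hv'', hle'.trans hle⟩

section Values

variable {M α v : ZFSet}

theorem IsColGeqBddVal.mono {α' : ZFSet} (hα' : IsOrdZ α') (hαα' : α = α' ∨ α ∈ α')
    (hv : IsColGeqBddVal α v) : IsColGeqBddVal α' v := by
  rcases hv with hv | ⟨β, hβ, rfl⟩
  · rcases hαα' with rfl | hαα'
    exacts [Or.inl hv, Or.inl (hα'.1.mem_trans hv hαα')]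
  · exact Or.inr ⟨β, (eq_or_mem_trans hα' hβ.symm hαα').symm, rfl⟩

theorem IsColGeqBddVal.isColGeqVal (hM : IsCTM M) (hα : IsOrdIn M α)
    (hv : IsColGeqBddVal α v) : IsColGeqVal M v := by
  rcases hv with hv | ⟨β, hβ | rfl, rfl⟩
  · exact Or.inl ⟨hM.mem_of_mem hv hα.1, hα.2.mem hv⟩
  · exact Or.inr ⟨β, ⟨hM.mem_of_mem hβ hα.1, hα.2.mem hβ⟩, rfl⟩
  · exact Or.inr ⟨_, hα, rfl⟩

theorem IsColGeqVal.exists_isColGeqBddVal (hM : IsCTM M) (hv : IsColGeqVal M v) :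
    ∃ α, IsOrdIn M α ∧ IsColGeqBddVal α v := by
  rcases hv with hv | ⟨γ, hγ, rfl⟩
  · exact ⟨insert v v, ⟨hM.insert_mem hv.1 hv.1, isOrdZ_iff_isOrdinal.2
      (ZFSet.isOrdinal_succ (isOrdZ_iff_isOrdinal.1 hv.2))⟩, Or.inl (ZFSet.mem_insert v v)⟩
  · exact ⟨γ, hγ, Or.inr ⟨γ, Or.inr rfl, rfl⟩⟩

theorem exists_isColGeqBddVal_of_finite (hM : IsCTM M) {s : Set ZFSet} (hs : s.Finite)
    (h : ∀ v ∈ s, IsColGeqVal M v) : ∃ α, IsOrdIn M α ∧ ∀ v ∈ s, IsColGeqBddVal α v := by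
  induction s, hs using Set.Finite.induction_on with
  | empty => exact ⟨∅, ⟨hM.empty_mem, isOrdZ_iff_isOrdinal.2 ZFSet.isOrdinal_empty⟩, by simp⟩
  | @insert v s _ _ ih =>
    obtain ⟨α₀, hα₀, hs⟩ := ih fun w hw => h w (Set.mem_insert_of_mem v hw)
    obtain ⟨α₁, hα₁, hv⟩ := (h v (Set.mem_insert v s)).exists_isColGeqBddVal hM
    have ho₀ := isOrdZ_iff_isOrdinal.1 hα₀.2
    have ho₁ := isOrdZ_iff_isOrdinal.1 hα₁.2
    rcases ho₀.subset_total ho₁ with h01 | h10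
    · refine ⟨α₁, hα₁, Set.forall_mem_insert.2 ⟨hv, fun w hw => (hs w hw).mono hα₁.2 ?_⟩⟩
      exact (ho₀.subset_iff_eq_or_mem ho₁).1 h01
    · refine ⟨α₀, hα₀, Set.forall_mem_insert.2 ⟨hv.mono hα₀.2 ?_, hs⟩⟩
      exact (ho₁.subset_iff_eq_or_mem ho₀).1 h10

theorem IsColGeqVal.colGeqValLe_geqSym (hα : IsOrdIn M α) (hv : IsColGeqVal M v)
    (hnv : ¬ IsColGeqBddVal α v) :
    ColGeqValLe M v (geqSym α) := by
  have ho := isOrdZ_iff_isOrdinal.1 hα.2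
  rcases hv with hv | ⟨γ, hγ, rfl⟩
  · refine Or.inr ⟨α, hα, rfl, v, hv, ?_, Or.inl rfl⟩
    rcases ho.mem_trichotomous (isOrdZ_iff_isOrdinal.1 hv.2) with h | h | h
    exacts [Or.inr h, Or.inl h, (hnv (Or.inl h)).elim]
  · refine Or.inr ⟨α, hα, rfl, γ, hγ, ?_, Or.inr rfl⟩
    rcases ho.mem_trichotomous (isOrdZ_iff_isOrdinal.1 hγ.2) with h | h | h
    exacts [Or.inr h, (hnv (Or.inr ⟨γ, Or.inr h.symm, rfl⟩)).elim,
      (hnv (Or.inr ⟨γ, Or.inl h, rfl⟩)).elim]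

theorem IsColGeqBddVal.eq_geqSym_of_colGeqValLe (hα : IsOrdZ α) (hv : IsColGeqBddVal α v)
    (h : ColGeqValLe M v (geqSym α)) : v = geqSym α := by
  rcases h with h | ⟨α', -, hαα', β, hβ, hαβ, hvβ⟩
  · exact h
  obtain rfl := geqSym_injective hαα'
  rcases hv with hv | ⟨β', hβ', rfl⟩
  · exfalso
    rcases hvβ with rfl | rfl
    · rcases hαβ with rfl | hαv
      exacts [ZFSet.mem_irrefl _ hv, ZFSet.mem_asymm hv hαv]
    · exact (hα.mem hv).ne_geqSym β rfl
  · rcases hvβ with hvβ | hvβ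
    · exact (hβ.2.ne_geqSym β' hvβ.symm).elim
    · obtain rfl := geqSym_injective hvβ
      rcases hαβ with rfl | hαβ
      · rfl
      rcases hβ' with hβ' | rfl
      exacts [(ZFSet.mem_asymm hβ' hαβ).elim, rfl]

end Values

theorem mem_colGeqP_iff {M p : ZFSet} (hM : IsCTM M) :
    p ∈ ColGeqP M ↔ ∃ α, IsOrdIn M α ∧ p ∈ ColGeqBddP α := by
  constructor
  · rintro ⟨hfun, hfin, hdom, hran⟩
    obtain ⟨α, hα, hbdd⟩ := exists_isColGeqBddVal_of_finite hM (ranZ_finite hfin) hran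
    exact ⟨α, hα, hfun, hfin, hdom, hbdd⟩
  · rintro ⟨α, hα, hfun, hfin, hdom, hran⟩
    exact ⟨hfun, hfin, hdom, fun v hv => IsColGeqBddVal.isColGeqVal hM hα (hran v hv)⟩

theorem colGeqBddP_mono {α α' : ZFSet} (hα' : IsOrdZ α') (h : α ∈ α') :
    ColGeqBddP α ⊆ ColGeqBddP α' :=
  fun _ ⟨hfun, hfin, hdom, hran⟩ => ⟨hfun, hfin, hdom, fun v hv =>
    IsColGeqBddVal.mono hα' (Or.inr h) (hran v hv)⟩

/-! ### `Col_≥(ω, α)` is a complete subforcing -/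

universe u

instance small_pairs_mem (p : ZFSet.{u}) :
    Small.{u} {nc : ZFSet.{u} × ZFSet.{u} // ZFSet.pair nc.1 nc.2 ∈ p} :=
  small_of_injective (f := fun nc => (⟨ZFSet.pair nc.1.1 nc.1.2, nc.2⟩ : p))
    fun _ _ h => Subtype.ext (ZFSet.pair_injective.uncurry (congrArg Subtype.val h))

noncomputable def mapSndZ (f : ZFSet → ZFSet) (p : ZFSet) : ZFSet :=
  ZFSet.range fun nc : {nc : ZFSet × ZFSet // ZFSet.pair nc.1 nc.2 ∈ p} =>
    ZFSet.pair nc.1.1 (f nc.1.2)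

section MapSnd

variable {f : ZFSet → ZFSet} {p : ZFSet}

theorem mem_mapSndZ {w : ZFSet} :
    w ∈ mapSndZ f p ↔ ∃ n c, ZFSet.pair n c ∈ p ∧ w = ZFSet.pair n (f c) := by
  simp only [mapSndZ, ZFSet.mem_range, Subtype.exists, Prod.exists]
  exact exists₂_congr fun n c => ⟨fun ⟨h, e⟩ => ⟨h, e.symm⟩, fun ⟨h, e⟩ => ⟨h, e.symm⟩⟩

theorem pair_mem_mapSndZ {n v : ZFSet} :
    ZFSet.pair n v ∈ mapSndZ f p ↔ ∃ c, ZFSet.pair n c ∈ p ∧ v = f c := by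
  simp only [mem_mapSndZ, ZFSet.pair_inj]
  exact ⟨fun ⟨_, c, hc, hn, hv⟩ => ⟨c, hn ▸ hc, hv⟩, fun ⟨c, hc, hv⟩ => ⟨n, c, hc, rfl, hv⟩⟩

theorem isFuncZ_mapSndZ (hp : isFuncZ p) : isFuncZ (mapSndZ f p) := by
  refine ⟨fun w hw => ?_, fun n v v' hv hv' => ?_⟩
  · obtain ⟨n, c, -, rfl⟩ := mem_mapSndZ.1 hw
    exact ⟨n, f c, rfl⟩
  · obtain ⟨c, hc, rfl⟩ := pair_mem_mapSndZ.1 hv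
    obtain ⟨c', hc', rfl⟩ := pair_mem_mapSndZ.1 hv'
    rw [hp.2 n c c' hc hc']

theorem mapSndZ_finite (hp : p.toSet.Finite) : (mapSndZ f p).toSet.Finite :=
  ((hp.preimage ZFSet.pair_injective.uncurry.injOn).image
    fun nc => ZFSet.pair nc.1 (f nc.2)).subset fun w hw => by
    obtain ⟨n, c, hc, rfl⟩ := mem_mapSndZ.1 hw
    exact ⟨(n, c), hc, rfl⟩

end MapSnd

def glueZ (B : ZFSet → Prop) (p r : ZFSet) : ZFSet :=
  ZFSet.sep (fun w => ∃ n v, w = ZFSet.pair n v ∧ B n) p ∪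
    ZFSet.sep (fun w => ∃ n v, w = ZFSet.pair n v ∧ ¬ B n) r

section Glue

variable {B : ZFSet → Prop} {M p r : ZFSet}

theorem mem_glueZ {w : ZFSet} :
    w ∈ glueZ B p r ↔ ∃ n v, w = ZFSet.pair n v ∧ (B n ∧ w ∈ p ∨ ¬ B n ∧ w ∈ r) := by
  simp only [glueZ, ZFSet.mem_union, ZFSet.mem_sep]
  constructor
  · rintro (⟨hw, n, v, rfl, hn⟩ | ⟨hw, n, v, rfl, hn⟩)
    exacts [⟨n, v, rfl, Or.inl ⟨hn, hw⟩⟩, ⟨n, v, rfl, Or.inr ⟨hn, hw⟩⟩]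
  · rintro ⟨n, v, rfl, ⟨hn, hw⟩ | ⟨hn, hw⟩⟩
    exacts [Or.inl ⟨hw, n, v, rfl, hn⟩, Or.inr ⟨hw, n, v, rfl, hn⟩]

theorem pair_mem_glueZ {n v : ZFSet} :
    ZFSet.pair n v ∈ glueZ B p r ↔ B n ∧ ZFSet.pair n v ∈ p ∨ ¬ B n ∧ ZFSet.pair n v ∈ r := by
  rw [mem_glueZ]
  constructor
  · rintro ⟨n', v', h, hw⟩
    obtain ⟨rfl, rfl⟩ := ZFSet.pair_inj.1 h
    exact hw
  · exact fun hw => ⟨n, v, rfl, hw⟩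

theorem glueZ_mem_colGeqP (hp : p ∈ ColGeqP M) (hr : r ∈ ColGeqP M) : glueZ B p r ∈ ColGeqP M := by
  obtain ⟨hpf, hpfin, hpdom, hpran⟩ := hp
  obtain ⟨hrf, hrfin, hrdom, hrran⟩ := hr
  have hsub : ∀ n v, ZFSet.pair n v ∈ glueZ B p r → ZFSet.pair n v ∈ p ∨ ZFSet.pair n v ∈ r :=
    fun n v h => (pair_mem_glueZ.1 h).imp And.right And.right
  refine ⟨⟨fun w hw => ?_, fun n v v' hv hv' => ?_⟩, ?_, fun n ⟨v, hv⟩ => ?_, fun v ⟨n, hv⟩ => ?_⟩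
  · obtain ⟨n, v, rfl, -⟩ := mem_glueZ.1 hw
    exact ⟨n, v, rfl⟩
  · rcases pair_mem_glueZ.1 hv with ⟨hn, hv⟩ | ⟨hn, hv⟩ <;>
      rcases pair_mem_glueZ.1 hv' with ⟨hn', hv'⟩ | ⟨hn', hv'⟩
    exacts [hpf.2 n v v' hv hv', (hn' hn).elim, (hn hn').elim, hrf.2 n v v' hv hv']
  · refine (hpfin.union hrfin).subset fun w hw => ?_
    obtain ⟨n, v, rfl, hw⟩ := mem_glueZ.1 hw
    exact hw.imp And.right And.right
  · rcases hsub n v hv with h | h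
    exacts [hpdom n ⟨v, h⟩, hrdom n ⟨v, h⟩]
  · rcases hsub n v hv with h | h
    exacts [hpran v ⟨n, h⟩, hrran v ⟨n, h⟩]

theorem colGeqLe_glueZ_left
    (h : ∀ n c, ZFSet.pair n c ∈ p → ¬ B n → ∃ v, ZFSet.pair n v ∈ r ∧ ColGeqValLe M v c) :
    ColGeqLe M (glueZ B p r) p := by
  refine colGeqLe_iff.2 fun n c hc => ?_
  by_cases hn : B n
  · exact ⟨c, pair_mem_glueZ.2 (Or.inl ⟨hn, hc⟩), Or.inl rfl⟩
  · obtain ⟨v, hv, hle⟩ := h n c hc hn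
    exact ⟨v, pair_mem_glueZ.2 (Or.inr ⟨hn, hv⟩), hle⟩

theorem colGeqLe_glueZ_right
    (h : ∀ n v, ZFSet.pair n v ∈ r → B n → ∃ c, ZFSet.pair n c ∈ p ∧ ColGeqValLe M c v) :
    ColGeqLe M (glueZ B p r) r := by
  refine colGeqLe_iff.2 fun n v hv => ?_
  by_cases hn : B n
  · obtain ⟨c, hc, hle⟩ := h n v hv hn
    exact ⟨c, pair_mem_glueZ.2 (Or.inl ⟨hn, hc⟩), hle⟩
  · exact ⟨v, pair_mem_glueZ.2 (Or.inr ⟨hn, hv⟩), Or.inl rfl⟩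

end Glue

theorem exists_reduction {M α p : ZFSet} (hM : IsCTM M) (hα : IsOrdIn M α) (hp : p ∈ ColGeqP M) :
    ∃ π ∈ ColGeqBddP α, ColGeqLe M p π ∧
      ∀ r ∈ ColGeqBddP α, ColGeqLe M r π → ∃ s ∈ ColGeqP M, ColGeqLe M s p ∧ ColGeqLe M s r := by
  obtain ⟨hfun, hfin, hdom, hran⟩ := hp
  let proj : ZFSet → ZFSet := fun c => if IsColGeqBddVal α c then c else geqSym α
  have hproj : ∀ c, IsColGeqBddVal α (proj c) := fun c => by
    unfold proj
    split_ifs with hc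
    exacts [hc, Or.inr ⟨α, Or.inr rfl, rfl⟩]
  have hle_proj : ∀ c, IsColGeqVal M c → ColGeqValLe M c (proj c) := fun c hc => by
    unfold proj
    split_ifs with hbdd
    exacts [Or.inl rfl, hc.colGeqValLe_geqSym hα hbdd]
  refine ⟨mapSndZ proj p, ⟨isFuncZ_mapSndZ hfun, mapSndZ_finite hfin, fun n ⟨v, hv⟩ => ?_,
    fun v ⟨n, hv⟩ => ?_⟩, colGeqLe_iff.2 fun n v hv => ?_, fun r hr hrπ => ?_⟩
  · obtain ⟨c, hc, -⟩ := pair_mem_mapSndZ.1 hv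
    exact hdom n ⟨c, hc⟩
  · obtain ⟨c, -, rfl⟩ := pair_mem_mapSndZ.1 hv
    exact hproj c
  · obtain ⟨c, hc, rfl⟩ := pair_mem_mapSndZ.1 hv
    exact ⟨c, hc, hle_proj c (hran c ⟨n, hc⟩)⟩
  let Big : ZFSet → Prop := fun n => ∃ c, ZFSet.pair n c ∈ p ∧ ¬ IsColGeqBddVal α c
  refine ⟨glueZ Big p r, glueZ_mem_colGeqP ⟨hfun, hfin, hdom, hran⟩
    ((mem_colGeqP_iff hM).2 ⟨α, hα, hr⟩), colGeqLe_glueZ_left fun n c hc hn => ?_,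
    colGeqLe_glueZ_right fun n v hv ⟨c, hc, hbig⟩ => ⟨c, hc, ?_⟩⟩
  · have hbdd : IsColGeqBddVal α c := by_contra fun h => hn ⟨c, hc, h⟩
    have hcπ : ZFSet.pair n c ∈ mapSndZ proj p := pair_mem_mapSndZ.2 ⟨c, hc, by simp [proj, hbdd]⟩
    exact (colGeqLe_iff.1 hrπ) n c hcπ
  · have hαπ : ZFSet.pair n (geqSym α) ∈ mapSndZ proj p :=
      pair_mem_mapSndZ.2 ⟨c, hc, by simp [proj, hbig]⟩
    obtain ⟨v', hv', hle⟩ := colGeqLe_iff.1 hrπ n _ hαπ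
    obtain rfl := hr.1.2 n v v' hv hv'
    rw [IsColGeqBddVal.eq_geqSym_of_colGeqValLe hα.2 (hr.2.2.2 v ⟨n, hv⟩) hle]
    exact IsColGeqVal.colGeqValLe_geqSym hα (hran c ⟨n, hc⟩) hbig

theorem predense_of_predense_colGeqBddP {M α : ZFSet} (hM : IsCTM M) (hα : IsOrdIn M α)
    (A : Set ZFSet)
    (hmax : ∀ p ∈ ColGeqBddP α, ∃ q ∈ A, ∃ r ∈ ColGeqBddP α, ColGeqLe M r p ∧ ColGeqLe M r q) :
    ∀ p ∈ ColGeqP M, ∃ q ∈ A, ∃ s ∈ ColGeqP M, ColGeqLe M s p ∧ ColGeqLe M s q := by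
  intro p hp
  obtain ⟨π, hπ, -, hred⟩ := exists_reduction hM hα hp
  obtain ⟨q, hqA, r, hr, hrπ, hrq⟩ := hmax π hπ
  obtain ⟨s, hs, hsp, hsr⟩ := hred r hr hrπ
  exact ⟨q, hqA, s, hs, hsp, colGeqLe_trans hsr hrq⟩

/-- For every countable transitive model `M` of `ZF⁻`,
`Col_≥(ω, Ord)^M` is the union of the increasing `Ord^M`-indexed family of the
suborders `Col_≥(ω, α)`, each of which is (coded by) an element of `M` and is a
complete subforcing: every maximal antichain of `Col_≥(ω, α)` remains maximal in
`Col_≥(ω, Ord)^M`. -/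
theorem statement7 (M : ZFSet) (hM : IsCTM M) :
    (∀ p : ZFSet, p ∈ ColGeqP M ↔ ∃ α, IsOrdIn M α ∧ p ∈ ColGeqBddP α) ∧
    (∀ α, IsOrdIn M α → ∃ s : ZFSet, s ∈ M ∧ s.toSet = ColGeqBddP α) ∧
    (∀ α α', IsOrdIn M α → IsOrdIn M α' → α ∈ α' → ColGeqBddP α ⊆ ColGeqBddP α') ∧
    (∀ α, IsOrdIn M α → ∀ A : Set ZFSet, A ⊆ ColGeqBddP α →
      (∀ p ∈ A, ∀ q ∈ A, p ≠ q →
        ¬ ∃ r ∈ ColGeqBddP α, ColGeqLe M r p ∧ ColGeqLe M r q) →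
      (∀ p ∈ ColGeqBddP α, ∃ q ∈ A, ∃ r ∈ ColGeqBddP α, ColGeqLe M r p ∧ ColGeqLe M r q) →
      (∀ p ∈ ColGeqP M, ∃ q ∈ A, ∃ r ∈ ColGeqP M, ColGeqLe M r p ∧ ColGeqLe M r q)) :=
  ⟨fun _ => mem_colGeqP_iff hM, fun _ hα => hM.exists_toSet_eq_colGeqBddP hα.1,
    fun _ _ _ hα' h => colGeqBddP_mono hα'.2 h,
    fun _ hα A _ _ hmax => predense_of_predense_colGeqBddP hM hα A hmax⟩

end CF
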